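/- Let k be an algebraically closed field of characteristic 3 and let g = a·s⁴ + b·s³·t + c·s·t³ + d·t⁴ ∈ k[s,t] with a, b, c, d ∈ k and g ≠ 0. Then there exists an invertible matrix (α β; γ δ) ∈ GL₂(k) such that substituting s ↦ α·s + β·t and t ↦ γ·s + δ·t into g yields one of the three polynomials s⁴, s³·t, or s³·t − s·t³. -/

import Mathlib

open MvPolynomial

lemma expand_aeval {k : Type*} [Field k] [CharP k 3] (a b c d al be ga de : k) :
    aeval (![C al * X 0 + C be * X 1, C ga * X 0 + C de * X 1] : Fin 2 → MvPolynomial ℕ k)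
      (C a * X 0 ^ 4 + C b * X 0 ^ 3 * X 1 + C c * X 0 * X 1 ^ 3 + C d * X 1 ^ 4
        : MvPolynomial (Fin 2) k)
    = C (a*al^4 + b*al^3*ga + c*al*ga^3 + d*ga^4) * X 0 ^ 4
    + C (a*al^3*be + b*al^3*de + c*be*ga^3 + d*ga^3*de) * X 0 ^ 3 * X 1
    + C (a*al*be^3 + b*be^3*ga + c*al*de^3 + d*ga*de^3) * X 0 * X 1 ^ 3
    + C (a*be^4 + b*be^3*de + c*be*de^3 + d*de^4) * X 1 ^ 4 := by
  have : Fact (Nat.Prime 3) := ⟨by norm_num⟩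
  have hA : (C al * X 0 + C be * X 1 : MvPolynomial ℕ k) ^ 3
      = C (al^3) * X 0 ^ 3 + C (be^3) * X 1 ^ 3 := by
    rw [add_pow_char, mul_pow, mul_pow, ← map_pow, ← map_pow]
  have hB : (C ga * X 0 + C de * X 1 : MvPolynomial ℕ k) ^ 3
      = C (ga^3) * X 0 ^ 3 + C (de^3) * X 1 ^ 3 := by
    rw [add_pow_char, mul_pow, mul_pow, ← map_pow, ← map_pow]
  have gen : ∀ A B A3 B3 : MvPolynomial ℕ k, A ^ 3 = A3 → B ^ 3 = B3 →
      C a * A ^ 4 + C b * A ^ 3 * B + C c * A * B ^ 3 + C d * B ^ 4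
      = C a * (A3 * A) + C b * (A3 * B) + C c * (A * B3) + C d * (B3 * B) := by
    intro A B A3 B3 h1 h2; subst h1; subst h2; ring
  simp only [map_add, map_mul, map_pow, aeval_C, aeval_X, Matrix.cons_val_zero,
    Matrix.cons_val_one, Matrix.head_cons, algebraMap_eq]
  rw [gen _ _ _ _ hA hB]
  simp only [map_add, map_mul, map_pow]
  ring

lemma cubic_root {k : Type*} [Field k] [IsAlgClosed k] (u v w : k) (hu : u ≠ 0) :
    ∃ x : k, u * x ^ 3 + v * x + w = 0 := by
  have hdeg : (Polynomial.C u * Polynomial.X ^ 3 + Polynomial.C v * Polynomial.X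
      + Polynomial.C w : Polynomial k).degree = 3 := by
    compute_degree!
  obtain ⟨x, hx⟩ := IsAlgClosed.exists_root (Polynomial.C u * Polynomial.X ^ 3
    + Polynomial.C v * Polynomial.X + Polynomial.C w : Polynomial k)
    (by rw [hdeg]; norm_num)
  refine ⟨x, ?_⟩
  simpa [Polynomial.IsRoot] using hx

lemma quartic_two_roots {k : Type*} [Field k] [IsAlgClosed k] (h3 : (3:k) = 0)
    (a b c d : k) (ha : a ≠ 0) (hdet : a*d - b*c ≠ 0) :
    ∃ r₁ r₂ : k, (a*r₁^4 + b*r₁^3 + c*r₁ + d = 0) ∧ (a*r₂^4 + b*r₂^3 + c*r₂ + d = 0)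
      ∧ r₁ ≠ r₂ := by
  classical
  set p : Polynomial k := Polynomial.C a * Polynomial.X ^ 4 + Polynomial.C b * Polynomial.X ^ 3
    + Polynomial.C c * Polynomial.X + Polynomial.C d with hp
  have hdeg : p.natDegree = 4 := by rw [hp]; compute_degree!
  have hcard : p.roots.card = 4 := by
    rw [← hdeg]
    exact (Polynomial.splits_iff_card_roots.mp (IsAlgClosed.splits p))
  have hne : p.roots ≠ 0 := by
    intro h; rw [h] at hcard; simp at hcard
  obtain ⟨r, hr⟩ := Multiset.exists_mem_of_ne_zero hne
  have hroot : ∀ x ∈ p.roots, a*x^4 + b*x^3 + c*x + d = 0 := by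
    intro x hx
    have := Polynomial.isRoot_of_mem_roots hx
    simpa [hp, Polynomial.IsRoot] using this
  by_contra hcon
  push_neg at hcon
  have hall : ∀ x ∈ p.roots, x = r := by
    intro x hx
    exact hcon x r (hroot x hx) (hroot r hr)
  have hrep : p.roots = Multiset.replicate 4 r := by
    rw [← hcard]; exact Multiset.eq_replicate_card.mpr hall
  have hlc : p.leadingCoeff = a := by
    rw [Polynomial.leadingCoeff, hdeg, hp]
    simp [Polynomial.coeff_add, Polynomial.coeff_C_mul, Polynomial.coeff_X_pow,
      Polynomial.coeff_C, Polynomial.coeff_X]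
  have hfact := Polynomial.C_leadingCoeff_mul_prod_multiset_X_sub_C (p := p)
    (by rw [hcard, hdeg])
  rw [hrep, hlc] at hfact
  simp only [Multiset.map_replicate, Multiset.prod_replicate] at hfact
  have hexp : Polynomial.C a * (Polynomial.X - Polynomial.C r) ^ 4
      = Polynomial.C a * Polynomial.X ^ 4 + Polynomial.C (-(4*a*r)) * Polynomial.X ^ 3
      + Polynomial.C (6*a*r^2) * Polynomial.X ^ 2 + Polynomial.C (-(4*a*r^3)) * Polynomial.X
      + Polynomial.C (a*r^4) := by
    simp only [map_neg, map_mul, map_ofNat, map_pow]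
    ring
  rw [hexp] at hfact
  have hb := congrArg (fun q => Polynomial.coeff q 3) hfact
  have hc := congrArg (fun q => Polynomial.coeff q 1) hfact
  have hd := congrArg (fun q => Polynomial.coeff q 0) hfact
  simp only [hp, Polynomial.coeff_add, Polynomial.coeff_C_mul, Polynomial.coeff_X_pow,
    Polynomial.coeff_C, Polynomial.coeff_X] at hb hc hd
  norm_num at hb hc hd
  apply hdet
  rw [← hb, ← hc, ← hd]
  linear_combination (-5*a^2*r^4) * h3

lemma norm_form1 {k : Type*} [Field k] (c1 c2 c3 c4 : k) (h1 : c1 = 1) (h2 : c2 = 0)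
    (h3 : c3 = 0) (h4 : c4 = 0) :
    (C c1 * X 0 ^ 4 + C c2 * X 0 ^ 3 * X 1 + C c3 * X 0 * X 1 ^ 3 + C c4 * X 1 ^ 4
      : MvPolynomial ℕ k) = X 0 ^ 4 := by
  rw [h1, h2, h3, h4]; simp

lemma norm_form2 {k : Type*} [Field k] (c1 c2 c3 c4 : k) (h1 : c1 = 0) (h2 : c2 = 1)
    (h3 : c3 = 0) (h4 : c4 = 0) :
    (C c1 * X 0 ^ 4 + C c2 * X 0 ^ 3 * X 1 + C c3 * X 0 * X 1 ^ 3 + C c4 * X 1 ^ 4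
      : MvPolynomial ℕ k) = X 0 ^ 3 * X 1 := by
  rw [h1, h2, h3, h4]; simp

lemma norm_form3 {k : Type*} [Field k] (c1 c2 c3 c4 : k) (h1 : c1 = 0) (h2 : c2 = 1)
    (h3 : c3 = -1) (h4 : c4 = 0) :
    (C c1 * X 0 ^ 4 + C c2 * X 0 ^ 3 * X 1 + C c3 * X 0 * X 1 ^ 3 + C c4 * X 1 ^ 4
      : MvPolynomial ℕ k) = X 0 ^ 3 * X 1 - X 0 * X 1 ^ 3 := by
  rw [h1, h2, h3, h4]
  simp only [map_zero, map_one, map_neg, zero_mul, add_zero, zero_add, one_mul, neg_mul]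
  ring

theorem char3_quartic_normal_forms (k : Type*) [Field k] [IsAlgClosed k] [CharP k 3]
    (a b c d : k) (g : MvPolynomial (Fin 2) k)
    (hg : g = C a * X 0 ^ 4 + C b * X 0 ^ 3 * X 1 + C c * X 0 * X 1 ^ 3 + C d * X 1 ^ 4)
    (hg0 : g ≠ 0) :
    ∃ α β γ δ : k, α * δ - β * γ ≠ 0 ∧
      (aeval ![C α * X 0 + C β * X 1, C γ * X 0 + C δ * X 1] g = X 0 ^ 4 ∨
       aeval ![C α * X 0 + C β * X 1, C γ * X 0 + C δ * X 1] g = X 0 ^ 3 * X 1 ∨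
       aeval ![C α * X 0 + C β * X 1, C γ * X 0 + C δ * X 1] g
         = X 0 ^ 3 * X 1 - X 0 * X 1 ^ 3) := by
  have h3 : (3:k) = 0 := by
    have := CharP.cast_eq_zero k 3
    exact_mod_cast this
  by_cases hdet : a*d - b*c = 0
  · -- rank one case
    have hne : ¬(a = 0 ∧ b = 0 ∧ c = 0 ∧ d = 0) := by
      rintro ⟨h1, h2, h4, h5⟩
      apply hg0
      rw [hg, h1, h2, h4, h5]
      simp
    obtain ⟨u₁, u₂, v₁, v₂, ha, hb, hc, hd, hu, hv⟩ :
        ∃ u₁ u₂ v₁ v₂ : k, a = u₁*v₁ ∧ b = u₁*v₂ ∧ c = u₂*v₁ ∧ d = u₂*v₂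
          ∧ (u₁ = 1 ∨ u₂ = 1) ∧ ¬(v₁ = 0 ∧ v₂ = 0) := by
      by_cases hab : a = 0 ∧ b = 0
      · exact ⟨0, 1, c, d, by simp [hab.1], by simp [hab.2], by simp, by simp, Or.inr rfl,
          by rintro ⟨h1, h2⟩; exact hne ⟨hab.1, hab.2, h1, h2⟩⟩
      · by_cases ha0 : a = 0
        · have hb0 : b ≠ 0 := fun h => hab ⟨ha0, h⟩
          have hc0 : c = 0 := by
            have hbc : b * c = 0 := by linear_combination (-1)*hdet + d*ha0
            exact (mul_eq_zero.mp hbc).resolve_left hb0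
          exact ⟨1, d/b, 0, b, by simp [ha0], by simp, by simp [hc0], by field_simp,
            Or.inl rfl, by rintro ⟨_, h2⟩; exact hb0 h2⟩
        · refine ⟨1, c/a, a, b, by simp, by simp, by field_simp, ?_, Or.inl rfl,
            by rintro ⟨h1, _⟩; exact ha0 h1⟩
          field_simp
          linear_combination hdet
    obtain ⟨p, hp⟩ := IsAlgClosed.exists_pow_nat_eq u₁ (n := 3) (by norm_num)
    obtain ⟨q, hq⟩ := IsAlgClosed.exists_pow_nat_eq u₂ (n := 3) (by norm_num)
    have hpq : p ≠ 0 ∨ q ≠ 0 := by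
      rcases hu with h | h
      · left; intro h0; apply one_ne_zero (α := k); rw [← h, ← hp, h0]; ring
      · right; intro h0; apply one_ne_zero (α := k); rw [← h, ← hq, h0]; ring
    by_cases hD : p*v₂ - q*v₁ = 0
    · -- g is a scalar times a fourth power
      obtain ⟨e, he, hv1, hv2⟩ : ∃ e : k, e ≠ 0 ∧ v₁ = e*p ∧ v₂ = e*q := by
        rcases hpq with hp0 | hq0
        · refine ⟨v₁/p, ?_, by field_simp, ?_⟩
          · intro h0
            have hv10 : v₁ = 0 := by
              field_simp at h0; simpa using h0
            have hv20 : v₂ = 0 := by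
              have : p * v₂ = 0 := by linear_combination hD + q*hv10
              exact (mul_eq_zero.mp this).resolve_left hp0
            exact hv ⟨hv10, hv20⟩
          · field_simp
            linear_combination hD
        · have hp0 : p * v₂ = q * v₁ := by linear_combination hD
          refine ⟨v₂/q, ?_, ?_, by field_simp⟩
          · intro h0
            have hv20 : v₂ = 0 := by field_simp at h0; simpa using h0
            have hv10 : v₁ = 0 := by
              have : q * v₁ = 0 := by linear_combination (-1)*hD + p*hv20
              exact (mul_eq_zero.mp this).resolve_left hq0
            exact hv ⟨hv10, hv20⟩
          · field_simp
            linear_combination (-1)*hD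
      obtain ⟨μ, hμ4⟩ := IsAlgClosed.exists_pow_nat_eq (e⁻¹) (n := 4) (by norm_num)
      have hμ : μ^4 * e = 1 := by rw [hμ4]; field_simp
      have hμ0 : μ ≠ 0 := by
        intro h0; rw [h0] at hμ; simp at hμ
      obtain ⟨al, ga, hαγ⟩ : ∃ al ga : k, p*al + q*ga = μ := by
        rcases hpq with hp0 | hq0
        · exact ⟨μ/p, 0, by field_simp; ring⟩
        · exact ⟨0, μ/q, by field_simp; ring⟩
      refine ⟨al, q, ga, -p, ?_, Or.inl ?_⟩
      · have hh : al*(-p) - q*ga = -μ := by linear_combination (-1)*hαγ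
        rw [hh]
        exact neg_ne_zero.mpr hμ0
      · rw [hg, expand_aeval]
        have hcube : p^3*al^3 + q^3*ga^3 = μ^3 := by
          linear_combination (μ^2 + μ*(p*al+q*ga) + (p*al+q*ga)^2) * hαγ
            - (p*al*q*ga*(p*al+q*ga)) * h3
        apply norm_form1
        · rw [ha, hb, hc, hd, hv1, hv2, ← hp, ← hq]
          linear_combination e*(p*al+q*ga)*hcube + e*μ^3*hαγ + hμ
        · rw [ha, hb, hc, hd, hv1, hv2, ← hp, ← hq]; ring
        · rw [ha, hb, hc, hd, hv1, hv2, ← hp, ← hq]; ring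
        · rw [ha, hb, hc, hd, hv1, hv2, ← hp, ← hq]; ring
    · -- g = L^3 L' with independent linear forms
      obtain ⟨l, hl3⟩ := IsAlgClosed.exists_pow_nat_eq (-(((p*v₂ - q*v₁)^4)⁻¹)) (n := 3)
        (by norm_num)
      have hl : l^3 * (p*v₂ - q*v₁)^4 = -1 := by
        rw [hl3]; field_simp
      have hl0 : l ≠ 0 := by
        intro h0
        have h2 : (-1 : k) = 0 := by rw [← hl, h0]; ring
        exact one_ne_zero (α := k) (neg_eq_zero.mp h2)
      refine ⟨l*v₂, q, -(l*v₁), -p, ?_, Or.inr (Or.inl ?_)⟩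
      · have hh : (l*v₂)*(-p) - q*(-(l*v₁)) = -(l*(p*v₂ - q*v₁)) := by ring
        rw [hh]
        exact neg_ne_zero.mpr (mul_ne_zero hl0 hD)
      · rw [hg, expand_aeval]
        apply norm_form2
        · rw [ha, hb, hc, hd, ← hp, ← hq]; ring
        · rw [ha, hb, hc, hd, ← hp, ← hq]
          linear_combination (-1)*hl + (-(l^3*(p*v₂)*(q*v₁)*(p*v₂-q*v₁)^2))*h3
        · rw [ha, hb, hc, hd, ← hp, ← hq]; ring
        · rw [ha, hb, hc, hd, ← hp, ← hq]; ring
  · -- rank two case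
    obtain ⟨al, ga, be, de, hr1, hr2, hdp⟩ :
        ∃ al ga be de : k, (a*al^4 + b*al^3*ga + c*al*ga^3 + d*ga^4 = 0)
          ∧ (a*be^4 + b*be^3*de + c*be*de^3 + d*de^4 = 0) ∧ al*de - be*ga ≠ 0 := by
      by_cases ha0 : a = 0
      · have hb0 : b ≠ 0 := by
          intro h0; apply hdet; rw [ha0, h0]; ring
        obtain ⟨x, hx⟩ := cubic_root b c d hb0
        refine ⟨1, 0, x, 1, by rw [ha0]; ring, ?_, by simp⟩
        rw [ha0]; linear_combination hx
      · obtain ⟨r₁, r₂, h1, h2, hner⟩ := quartic_two_roots h3 a b c d ha0 hdet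
        exact ⟨r₁, 1, r₂, 1, by linear_combination h1, by linear_combination h2,
          by simpa [sub_ne_zero] using hner⟩
    have hprod : (a*al^3*be + b*al^3*de + c*be*ga^3 + d*ga^3*de)
        * (a*al*be^3 + b*be^3*ga + c*al*de^3 + d*ga*de^3)
        = -((al*de - be*ga)^4 * (a*d - b*c)) := by
      linear_combination (a*be^4 + b*be^3*de + c*be*de^3 + d*de^4) * hr1
        - ((a*d-b*c)*al*be*ga*de*(al*de-be*ga)^2) * h3
    have hRne : -((al*de - be*ga)^4 * (a*d - b*c)) ≠ 0 :=
      neg_ne_zero.mpr (mul_ne_zero (pow_ne_zero 4 hdp) hdet)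
    have he12 : (a*al^3*be + b*al^3*de + c*be*ga^3 + d*ga^3*de) ≠ 0 := by
      intro h0; apply hRne; rw [← hprod, h0]; ring
    have he21 : (a*al*be^3 + b*be^3*ga + c*al*de^3 + d*ga*de^3) ≠ 0 := by
      intro h0; apply hRne; rw [← hprod, h0]; ring
    obtain ⟨l, hl8⟩ := IsAlgClosed.exists_pow_nat_eq
      (-(a*al*be^3 + b*be^3*ga + c*al*de^3 + d*ga*de^3)
        / (a*al^3*be + b*al^3*de + c*be*ga^3 + d*ga^3*de)^3) (n := 8) (by norm_num)
    have hl : l^8 * (a*al^3*be + b*al^3*de + c*be*ga^3 + d*ga^3*de)^3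
        = -(a*al*be^3 + b*be^3*ga + c*al*de^3 + d*ga*de^3) := by
      rw [hl8, div_mul_cancel₀ _ (pow_ne_zero 3 he12)]
    have hl0 : l ≠ 0 := by
      intro h0
      have h2 : -(a*al*be^3 + b*be^3*ga + c*al*de^3 + d*ga*de^3) = 0 := by
        rw [← hl, h0]; ring
      exact he21 (neg_eq_zero.mp h2)
    obtain ⟨μ, hμ⟩ : ∃ μ : k, μ * ((a*al^3*be + b*al^3*de + c*be*ga^3 + d*ga^3*de) * l^3) = 1 :=
      ⟨_, inv_mul_cancel₀ (mul_ne_zero he12 (pow_ne_zero 3 hl0))⟩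
    have hμ0 : μ ≠ 0 := by
      intro h0; rw [h0] at hμ; simp at hμ
    refine ⟨l*al, μ*be, l*ga, μ*de, ?_, Or.inr (Or.inr ?_)⟩
    · have hh : (l*al)*(μ*de) - (μ*be)*(l*ga) = l*μ*(al*de - be*ga) := by ring
      rw [hh]
      exact mul_ne_zero (mul_ne_zero hl0 hμ0) hdp
    · rw [hg, expand_aeval]
      apply norm_form3
      · linear_combination l^4 * hr1
      · linear_combination hμ
      · linear_combination (l*μ^3)*hl
          + (-((μ*((a*al^3*be + b*al^3*de + c*be*ga^3 + d*ga^3*de) * l^3))^2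
              + (μ*((a*al^3*be + b*al^3*de + c*be*ga^3 + d*ga^3*de) * l^3)) + 1))*hμ
      · linear_combination μ^4 * hr2
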